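/- Every bijection of the set of diagonals of a convex m-gon (m ≥ 5) that preserves the crossing relation in both directions is induced by a dihedral symmetry of the m-gon acting on endpoints. -/

import Mathlib

/-!
The ears `{c, c + 2}` are exactly the diagonals no two of whose crossing diagonals cross each
other, so a crossing-preserving bijection permutes the ears, say `ear c ↦ ear (g c)`. Ears `c`
and `d` cross iff `d = c ± 1`, so `g` is an injective map of `ZMod m` moving neighbours to
neighbours, hence `g x = ε x + t` with `ε = ±1`. Finally a diagonal `{a, b}` is the unique
diagonal crossed by the ears at `a - 1` and `b - 1`, so its image is crossed by the ears at
`g (a - 1)` and `g (b - 1)`, which pins it down.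
-/

/-- `x` lies strictly between `a` and `b` in the cyclic order on `ZMod m`. -/
def Pbetween (m : ℕ) (a x b : ZMod m) : Prop :=
  0 < (x - a).val ∧ (x - a).val < (b - a).val

/-- A diagonal of the convex `m`-gon: a pair of distinct non-adjacent vertices. -/
def PIsDiag (m : ℕ) (d : Finset (ZMod m)) : Prop :=
  ∃ a b : ZMod m, d = {a, b} ∧ a ≠ b ∧ a - b ≠ 1 ∧ b - a ≠ 1

/-- Two diagonals cross iff their endpoint pairs separate each other in cyclic order. -/
def PCross (m : ℕ) (d e : Finset (ZMod m)) : Prop :=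
  ∃ a b c d' : ZMod m, d = {a, b} ∧ e = {c, d'} ∧
    a ≠ b ∧ a ≠ c ∧ a ≠ d' ∧ b ≠ c ∧ b ≠ d' ∧ c ≠ d' ∧
    Xor' (Pbetween m a c b) (Pbetween m a d' b)

theorem Finset.pair_eq_pair_iff {α : Type*} [DecidableEq α] {a b c d : α} :
    ({a, b} : Finset α) = {c, d} ↔ a = c ∧ b = d ∨ a = d ∧ b = c := by
  rw [← Finset.coe_inj, Finset.coe_pair, Finset.coe_pair, Set.pair_eq_pair_iff]

namespace ZMod

variable {m : ℕ}

theorem natCast_ne_zero_of_lt {k : ℕ} (h0 : 0 < k) (hk : k < m) : (k : ZMod m) ≠ 0 := by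
  rw [Ne, ZMod.natCast_eq_zero_iff]
  exact fun h => (Nat.le_of_dvd h0 h).not_gt hk

theorem val_ne_of_ne [NeZero m] {x : ZMod m} {k : ℕ} (h : x ≠ k) : x.val ≠ k := by
  rintro rfl
  exact h (ZMod.natCast_zmod_val x).symm

theorem val_sub_eq_ite [NeZero m] (u v : ZMod m) :
    (u - v).val = if v.val ≤ u.val then u.val - v.val else u.val + m - v.val := by
  split_ifs with h
  · exact ZMod.val_sub h
  · have hv : v ≠ 0 := by
      rintro rfl
      simp at h
    have := ZMod.val_lt v
    rw [sub_eq_add_neg, ZMod.val_add, ZMod.neg_val, if_neg hv, Nat.mod_eq_of_lt (by omega)]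
    omega

end ZMod

namespace Polygon

variable {m : ℕ}

open ZMod

theorem isDiag_pair_iff {a b : ZMod m} :
    PIsDiag m {a, b} ↔ a ≠ b ∧ a - b ≠ 1 ∧ b - a ≠ 1 := by
  constructor
  · rintro ⟨a', b', h, hab⟩
    rcases Finset.pair_eq_pair_iff.mp h with ⟨rfl, rfl⟩ | ⟨rfl, rfl⟩
    · exact hab
    · exact ⟨hab.1.symm, hab.2.2, hab.2.1⟩
  · exact fun h => ⟨a, b, rfl, h⟩

theorem isDiag_pair_add {a b : ZMod m} (h : PIsDiag m {a, b}) (t : ZMod m) :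
    PIsDiag m {a + t, b + t} := by
  rw [isDiag_pair_iff, add_sub_add_right_eq_sub, add_sub_add_right_eq_sub, Ne, add_left_inj]
  exact isDiag_pair_iff.mp h

section Crossing

variable [NeZero m] {a b c d x : ZMod m}

theorem pbetween_iff_not_pbetween (hxa : x ≠ a) (hxb : x ≠ b) (hab : a ≠ b) :
    Pbetween m a x b ↔ ¬ Pbetween m b x a := by
  unfold Pbetween
  rw [val_sub_eq_ite x a, val_sub_eq_ite b a, val_sub_eq_ite x b, val_sub_eq_ite a b]
  have := ZMod.val_lt x
  have := ZMod.val_lt a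
  have := ZMod.val_lt b
  have := (ZMod.val_injective m).ne hxa
  have := (ZMod.val_injective m).ne hxb
  have := (ZMod.val_injective m).ne hab
  split_ifs <;> omega

theorem pcross_pair_iff (hab : a ≠ b) (hcd : c ≠ d) :
    PCross m {a, b} {c, d} ↔
      a ≠ c ∧ a ≠ d ∧ b ≠ c ∧ b ≠ d ∧ Xor (Pbetween m a c b) (Pbetween m a d b) := by
  refine ⟨?_, fun ⟨hac, had, hbc, hbd, h⟩ =>
    ⟨a, b, c, d, rfl, rfl, hab, hac, had, hbc, hbd, hcd, h⟩⟩
  rintro ⟨a', b', c', d', h1, h2, -, hac, had, hbc, hbd, -, hx⟩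
  change Xor _ _ at hx
  rcases Finset.pair_eq_pair_iff.mp h1 with ⟨rfl, rfl⟩ | ⟨rfl, rfl⟩ <;>
    rcases Finset.pair_eq_pair_iff.mp h2 with ⟨rfl, rfl⟩ | ⟨rfl, rfl⟩ <;>
    grind [pbetween_iff_not_pbetween]

theorem pcross_pair_iff_val (hab : a ≠ b) (hcd : c ≠ d) :
    PCross m {a, b} {c, d} ↔
      (0 < (c - a).val ∧ (c - a).val < (b - a).val ∧ (b - a).val < (d - a).val) ∨
      (0 < (d - a).val ∧ (d - a).val < (b - a).val ∧ (b - a).val < (c - a).val) := by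
  have hne : ∀ y z : ZMod m, y ≠ z ↔ (y - a).val ≠ (z - a).val := fun y z =>
    ((ZMod.val_injective m).eq_iff.trans sub_left_inj).not.symm
  rw [pcross_pair_iff hab hcd, hne a c, hne a d, hne b c, hne b d, sub_self, ZMod.val_zero]
  unfold Pbetween Xor
  omega

theorem pcross_pair_add_natCast {j : ℕ} (hj : 0 < j) (hjk : j < (b - a).val)
    (hkj : (b - a).val + j < m) : PCross m {a, b} {a + j, b + j} := by
  have hj_val : (j : ZMod m).val = j := ZMod.val_natCast_of_lt (by omega)
  have hab : a ≠ b := fun h => by simp [h] at hjk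
  rw [pcross_pair_iff_val hab (by simpa using hab), add_sub_cancel_left,
    show b + j - a = b - a + j by ring, ZMod.val_add_of_lt (by omega), hj_val]
  omega

end Crossing

def ear (c : ZMod m) : Finset (ZMod m) := {c, c + 2}

theorem exists_pcross_pcross_of_ne_ear [NeZero m] {a b : ZMod m} (hd : PIsDiag m {a, b})
    (hne : ∀ c, {a, b} ≠ ear c) :
    ∃ g h, PIsDiag m g ∧ PIsDiag m h ∧ PCross m {a, b} g ∧ PCross m {a, b} h ∧ PCross m g h := by
  obtain ⟨hab, h1, h2⟩ := isDiag_pair_iff.mp hd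
  have hsum : (b - a).val + (a - b).val = m := by
    have := ZMod.val_lt (b - a)
    rw [← neg_sub b a, ZMod.neg_val, if_neg (sub_ne_zero.mpr hab.symm)]
    omega
  have hk0 : (b - a).val ≠ 0 := by simpa [sub_eq_zero] using hab.symm
  have hk0' : (a - b).val ≠ 0 := by simpa [sub_eq_zero] using hab
  have hk1 : (b - a).val ≠ 1 := val_ne_of_ne (by simpa using h2)
  have hk1' : (a - b).val ≠ 1 := val_ne_of_ne (by simpa using h1)
  have hk2 : (b - a).val ≠ 2 := val_ne_of_ne fun h =>
    hne a (by rw [eq_add_of_sub_eq' (h.trans Nat.cast_ofNat)]; rfl)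
  have hk2' : (a - b).val ≠ 2 := val_ne_of_ne fun h =>
    hne b (by rw [Finset.pair_comm, eq_add_of_sub_eq' (h.trans Nat.cast_ofNat)]; rfl)
  -- `{a, b}` has at least two vertices on each side, so its translates by 1 and 2 cross it
  -- and each other
  refine ⟨{a + 1, b + 1}, {a + 2, b + 2}, isDiag_pair_add hd 1, isDiag_pair_add hd 2, ?_, ?_, ?_⟩
  · exact_mod_cast pcross_pair_add_natCast (j := 1) (by omega) (by omega) (by omega)
  · exact_mod_cast pcross_pair_add_natCast (j := 2) (by omega) (by omega) (by omega)
  · have h := pcross_pair_add_natCast (a := a + 1) (b := b + 1) (j := 1)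
    rw [add_sub_add_right_eq_sub, Nat.cast_one, add_assoc, add_assoc, one_add_one_eq_two] at h
    exact h (by omega) (by omega) (by omega)

theorem two_lt_val_sub_sub_one [NeZero m] {x y : ZMod m} (hxy : x ≠ y) (h1 : x - y ≠ 1)
    (h2 : y - x ≠ 1) : 2 < (y - (x - 1)).val := by
  have v0 : (y - (x - 1)).val ≠ 0 := val_ne_of_ne (k := 0) fun h => h1 (by
    push_cast at h; linear_combination -h)
  have v1 : (y - (x - 1)).val ≠ 1 := val_ne_of_ne (k := 1) fun h => hxy (by
    push_cast at h; linear_combination -h)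
  have v2 : (y - (x - 1)).val ≠ 2 := val_ne_of_ne (k := 2) fun h => h2 (by
    push_cast at h; linear_combination h)
  omega

theorem pcross_ear_iff (hm : 3 ≤ m) {a b c : ZMod m} (hd : PIsDiag m {a, b}) :
    PCross m (ear c) {a, b} ↔ c = a - 1 ∨ c = b - 1 := by
  have : NeZero m := ⟨by omega⟩
  obtain ⟨hab, h1, h2⟩ := isDiag_pair_iff.mp hd
  have hval2 : (c + 2 - c).val = 2 := by
    rw [add_sub_cancel_left]
    exact ZMod.val_ofNat_of_lt hm
  have hc : c ≠ c + 2 := fun h => by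
    rw [← h, sub_self, ZMod.val_zero] at hval2
    omega
  have hval1 : ∀ x : ZMod m, (x - (x - 1)).val = 1 := fun x => by
    rw [sub_sub_cancel, ZMod.val_one'' (by omega)]
  have eq_sub_one_of_val : ∀ x : ZMod m, (x - c).val = 1 → c = x - 1 := fun x h => by
    rw [eq_sub_iff_add_eq, add_comm, ← eq_sub_iff_add_eq]
    exact ZMod.val_injective m (by rw [h, ZMod.val_one'' (by omega)])
  rw [ear, pcross_pair_iff_val hc hab, hval2]
  constructor
  · rintro (⟨hu, hu', -⟩ | ⟨hv, hv', -⟩)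
    · exact .inl (eq_sub_one_of_val a (by omega))
    · exact .inr (eq_sub_one_of_val b (by omega))
  · rintro (rfl | rfl)
    · rw [hval1]
      exact .inl ⟨one_pos, one_lt_two, two_lt_val_sub_sub_one hab h1 h2⟩
    · rw [hval1]
      exact .inr ⟨one_pos, one_lt_two, two_lt_val_sub_sub_one hab.symm h2 h1⟩

theorem isDiag_ear (hm : 4 ≤ m) (c : ZMod m) : PIsDiag m (ear c) := by
  have h1 : (1 : ZMod m) ≠ 0 := by exact_mod_cast natCast_ne_zero_of_lt (k := 1) one_pos (by omega)
  have h2 : (2 : ZMod m) ≠ 0 := by exact_mod_cast natCast_ne_zero_of_lt (k := 2) two_pos (by omega)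
  have h3 : (3 : ZMod m) ≠ 0 := by exact_mod_cast natCast_ne_zero_of_lt (k := 3) three_pos hm
  exact isDiag_pair_iff.mpr ⟨fun h => h2 (by linear_combination -h),
    fun h => h3 (by linear_combination -h), fun h => h1 (by linear_combination h)⟩

theorem ear_injective (hm : 5 ≤ m) : Function.Injective (ear (m := m)) := by
  intro c d h
  have h4 : (4 : ZMod m) ≠ 0 := by exact_mod_cast natCast_ne_zero_of_lt (k := 4) four_pos hm
  rcases Finset.pair_eq_pair_iff.mp h with ⟨h, -⟩ | ⟨hc, hd⟩
  · exact h
  · exact absurd (by linear_combination hd - hc) h4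

theorem pcross_ear_ear_iff (hm : 4 ≤ m) {c d : ZMod m} :
    PCross m (ear c) (ear d) ↔ d = c + 1 ∨ d = c - 1 := by
  rw [show ear d = {d, d + 2} from rfl, pcross_ear_iff (by omega) (isDiag_ear hm d)]
  constructor <;> rintro (h | h) <;> [left; right; left; right] <;> linear_combination -h

theorem pair_eq_of_pcross_ear (hm : 3 ≤ m) {a b c c' : ZMod m} (hd : PIsDiag m {a, b})
    (hcc' : c ≠ c') (hc : PCross m (ear c) {a, b}) (hc' : PCross m (ear c') {a, b}) :
    ({a, b} : Finset (ZMod m)) = {c + 1, c' + 1} := by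
  rw [pcross_ear_iff hm hd] at hc hc'
  rcases hc with rfl | rfl <;> rcases hc' with rfl | rfl
  · exact absurd rfl hcc'
  · simp
  · simp [Finset.pair_comm]
  · exact absurd rfl hcc'

theorem not_pcross_of_mem {g h : Finset (ZMod m)} {x : ZMod m} (hg : x ∈ g) (hh : x ∈ h) :
    ¬ PCross m g h := by
  rintro ⟨a, b, c, d, rfl, rfl, -, hac, had, hbc, hbd, -⟩
  simp only [Finset.mem_insert, Finset.mem_singleton] at hg hh
  rcases hg with rfl | rfl <;> rcases hh with rfl | rfl <;> contradiction

def NeighborsNoncrossing (m : ℕ) (d : Finset (ZMod m)) : Prop :=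
  ∀ g h, PIsDiag m g → PIsDiag m h → PCross m d g → PCross m d h → ¬ PCross m g h

theorem neighborsNoncrossing_iff_exists_ear (hm : 3 ≤ m) {d : Finset (ZMod m)}
    (hd : PIsDiag m d) : NeighborsNoncrossing m d ↔ ∃ c, d = ear c := by
  have : NeZero m := ⟨by omega⟩
  constructor
  · intro H
    by_contra! hne
    obtain ⟨a, b, rfl, hab⟩ := hd
    obtain ⟨g, h, hg, hh, hdg, hdh, hgh⟩ := exists_pcross_pcross_of_ne_ear ⟨a, b, rfl, hab⟩ hne
    exact H g h hg hh hdg hdh hgh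
  · rintro ⟨c, rfl⟩ g h ⟨a, b, rfl, hgd⟩ ⟨a', b', rfl, hhd⟩ hg hh
    have mem : ∀ {x y : ZMod m}, PIsDiag m {x, y} → PCross m (ear c) {x, y} →
        c + 1 ∈ ({x, y} : Finset _) := by
      intro x y hxy hc
      rcases (pcross_ear_iff hm hxy).mp hc with rfl | rfl <;> simp
    exact not_pcross_of_mem (mem ⟨a, b, rfl, hgd⟩ hg) (mem ⟨a', b', rfl, hhd⟩ hh)

theorem exists_eq_mul_add_of_injective [NeZero m] (h2 : (2 : ZMod m) ≠ 0) {g : ZMod m → ZMod m}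
    (hg : Function.Injective g) (hstep : ∀ c, g (c + 1) = g c + 1 ∨ g (c + 1) = g c - 1) :
    ∃ ε, (ε = 1 ∨ ε = -1) ∧ ∀ x, g x = ε * x + g 0 := by
  have hsteady : ∀ c, g (c + 1 + 1) - g (c + 1) = g (c + 1) - g c := by
    intro c
    have hback : g (c + 1 + 1) ≠ g c := fun h => h2 (by linear_combination hg h)
    rcases hstep (c + 1) with h | h <;> rcases hstep c with h' | h'
    · rw [h, h']; ring
    · exact absurd (by rw [h, h']; ring) hback
    · exact absurd (by rw [h, h']; ring) hback
    · rw [h, h']; ring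
  have hdiff : ∀ n : ℕ, g (n + 1) - g n = g 1 - g 0 := by
    intro n
    induction n with
    | zero => simp
    | succ n ih => rw [← ih, Nat.cast_succ, hsteady]
  refine ⟨g 1 - g 0, ?_, fun x => ?_⟩
  · rcases hstep 0 with h | h <;> rw [zero_add] at h <;> [left; right] <;> linear_combination h
  · obtain ⟨n, rfl⟩ := ZMod.natCast_zmod_surjective x
    induction n with
    | zero => simp
    | succ n ih => push_cast; linear_combination ih + hdiff n

abbrev Diag (m : ℕ) := {d : Finset (ZMod m) // PIsDiag m d}

section CrossingEquiv

variable (f : Diag m ≃ Diag m) (hf : ∀ d e, PCross m d.1 e.1 ↔ PCross m (f d).1 (f e).1)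
include hf

theorem neighborsNoncrossing_map {d : Diag m} (hd : NeighborsNoncrossing m d.1) :
    NeighborsNoncrossing m (f d).1 := by
  intro g h hg hh hdg hdh hgh
  have hf' : ∀ e, PCross m (f d).1 e.1 ↔ PCross m d.1 (f.symm e).1 := fun e => by
    simpa using (hf d (f.symm e)).symm
  refine hd _ _ (f.symm ⟨g, hg⟩).2 (f.symm ⟨h, hh⟩).2 ((hf' ⟨g, hg⟩).mp hdg)
    ((hf' ⟨h, hh⟩).mp hdh) ?_
  exact (hf _ _).mpr (by simpa using hgh)

theorem exists_map_ear_eq_ear_mul_add (hm : 5 ≤ m) :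
    ∃ ε t : ZMod m, (ε = 1 ∨ ε = -1) ∧
      ∀ (d : Diag m) (c : ZMod m), d.1 = ear c → (f d).1 = ear (ε * c + t) := by
  have : NeZero m := ⟨by omega⟩
  let E (c : ZMod m) : Diag m := ⟨ear c, isDiag_ear (by omega) c⟩
  have hear (c : ZMod m) : ∃ c', (f (E c)).1 = ear c' :=
    (neighborsNoncrossing_iff_exists_ear (by omega) (f (E c)).2).mp <|
      neighborsNoncrossing_map f hf <|
        (neighborsNoncrossing_iff_exists_ear (by omega) (E c).2).mpr ⟨c, rfl⟩
  choose g hg using hear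
  have hinj : Function.Injective g := fun c c' h => ear_injective hm <|
    congrArg Subtype.val (f.injective (Subtype.ext ((hg c).trans (h ▸ (hg c').symm))))
  have hstep (c : ZMod m) : g (c + 1) = g c + 1 ∨ g (c + 1) = g c - 1 := by
    rw [← pcross_ear_ear_iff (by omega), ← hg, ← hg, ← hf]
    exact (pcross_ear_ear_iff (by omega)).mpr (.inl rfl)
  have h2 : (2 : ZMod m) ≠ 0 := by exact_mod_cast natCast_ne_zero_of_lt (k := 2) two_pos (by omega)
  obtain ⟨ε, hε, hgε⟩ := exists_eq_mul_add_of_injective h2 hinj hstep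
  refine ⟨ε, g 0, hε, fun d c hdc => ?_⟩
  rw [← hgε, ← hg, show d = E c from Subtype.ext hdc]

end CrossingEquiv

end Polygon

open Polygon in
/-- Every bijection of the set of diagonals of a convex `m`-gon (`m ≥ 5`) preserving the
crossing relation in both directions is induced by a dihedral symmetry `x ↦ ε x + c`
(`ε = ±1`) acting on endpoints. -/
theorem stmt_3 (m : ℕ) (hm : 5 ≤ m)
    (f : {d : Finset (ZMod m) // PIsDiag m d} ≃ {d : Finset (ZMod m) // PIsDiag m d})
    (hf : ∀ d e, PCross m d.1 e.1 ↔ PCross m (f d).1 (f e).1) :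
    ∃ ε c : ZMod m, (ε = 1 ∨ ε = -1) ∧
      ∀ (d : {d : Finset (ZMod m) // PIsDiag m d}) (a b : ZMod m),
        d.1 = {a, b} → (f d).1 = {ε * a + c, ε * b + c} := by
  obtain ⟨ε, t, hε, hear⟩ := exists_map_ear_eq_ear_mul_add f hf hm
  refine ⟨ε, t - ε + 1, hε, fun d a b hd => ?_⟩
  have hab : PIsDiag m {a, b} := hd ▸ d.2
  obtain ⟨a', b', hd', -⟩ := (f d).2
  have hab' : PIsDiag m {a', b'} := hd' ▸ (f d).2
  have hcross (c : ZMod m) (hc : c = a - 1 ∨ c = b - 1) : PCross m (ear (ε * c + t)) {a', b'} := by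
    rw [← hear ⟨ear c, isDiag_ear (by omega) c⟩ c rfl, ← hd', ← hf, hd]
    exact (pcross_ear_iff (by omega) hab).mpr hc
  have hne : ε * (a - 1) + t ≠ ε * (b - 1) + t := fun h => (isDiag_pair_iff.mp hab).1 <| by
    rcases hε with rfl | rfl
    · linear_combination h
    · linear_combination -h
  have hshift (x : ZMod m) : ε * (x - 1) + t + 1 = ε * x + (t - ε + 1) := by ring
  rw [hd', pair_eq_of_pcross_ear (by omega) hab' hne (hcross _ (.inl rfl)) (hcross _ (.inr rfl)),
    hshift, hshift]
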